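/- arXiv:2111.13556 — 8 statements merged into one kernel-verified Lean document; each statement's English description precedes it below -/
import Mathlib

section
/- Let G be a simple graph on vertex set V, let A, B ⊆ V with A ∪ B = V and A ∩ B = {u, v}, suppose u and v are adjacent in G, and suppose no edge of G joins a vertex of A \ {u, v} to a vertex of B \ {u, v}. Then for any x, y ∈ A that are joined by a path in G, x and y are joined by a path lying entirely in A, and the distance between x and y in the subgraph of G induced on A equals their distance in G. -/
open SimpleGraph

private lemma chord_exit {V : Type*} (G : SimpleGraph V) (A B : Set V) (u v : V)
    (hUnion : A ∪ B = Set.univ) (hInter : A ∩ B = {u, v})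
    (hsep : ∀ a b : V, a ∈ A \ {u, v} → b ∈ B \ {u, v} → ¬ G.Adj a b) :
    ∀ {w y : V} (p : G.Walk w y), w ∉ A → y ∈ A →
      ∃ z, z ∈ ({u, v} : Set V) ∧ ∃ r : G.Walk z y, r.length < p.length := by
  intro w y p
  induction p with
  | nil => intro hw hy; exact absurd hy hw
  | @cons w w' y h q ih =>
    intro hw hy
    have hwB : w ∈ B := by
      have := hUnion ▸ Set.mem_univ w
      rcases this with h1 | h1
      · exact absurd h1 hw
      · exact h1
    have hwuv : w ∉ ({u, v} : Set V) := by
      intro hc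
      exact hw ((hInter ▸ hc : w ∈ A ∩ B)).1
    by_cases hw' : w' ∈ A
    · -- w' must be u or v
      have hz : w' ∈ ({u, v} : Set V) := by
        by_contra hc
        exact hsep w' w ⟨hw', hc⟩ ⟨hwB, hwuv⟩ h.symm
      exact ⟨w', hz, q, by simp [Walk.length_cons]⟩
    · obtain ⟨z, hz, r, hr⟩ := ih hw' hy
      exact ⟨z, hz, r, by simp [Walk.length_cons]; omega⟩

private lemma chord_key {V : Type*} (G : SimpleGraph V) (A B : Set V) (u v : V)
    (hUnion : A ∪ B = Set.univ) (hInter : A ∩ B = {u, v}) (huv : G.Adj u v)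
    (hsep : ∀ a b : V, a ∈ A \ {u, v} → b ∈ B \ {u, v} → ¬ G.Adj a b) :
    ∀ n : ℕ, ∀ x y : V, ∀ hx : x ∈ A, ∀ hy : y ∈ A, ∀ p : G.Walk x y, p.length ≤ n →
      ∃ q : (G.induce A).Walk ⟨x, hx⟩ ⟨y, hy⟩, q.length ≤ p.length := by
  have hu : u ∈ A := (hInter ▸ (by simp : u ∈ ({u,v} : Set V)) : u ∈ A ∩ B).1
  have hvA : v ∈ A := (hInter ▸ (by simp : v ∈ ({u,v} : Set V)) : v ∈ A ∩ B).1
  intro n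
  induction n with
  | zero =>
    intro x y hx hy p hp
    cases p with
    | nil => exact ⟨Walk.nil, by simp⟩
    | cons h q => simp at hp
  | succ n ih =>
    intro x y hx hy p hp
    cases p with
    | nil => exact ⟨Walk.nil, by simp⟩
    | @cons _ w _ h q =>
      simp only [Walk.length_cons] at hp
      by_cases hw : w ∈ A
      · obtain ⟨q', hq'⟩ := ih w y hw hy q (by omega)
        refine ⟨Walk.cons (by exact h : (G.induce A).Adj ⟨x, hx⟩ ⟨w, hw⟩) q', ?_⟩
        exact Nat.succ_le_succ (by omega)
      · -- x must be u or v
        have hwB : w ∈ B := by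
          have := hUnion ▸ Set.mem_univ w
          rcases this with h1 | h1
          · exact absurd h1 hw
          · exact h1
        have hwuv : w ∉ ({u, v} : Set V) := fun hc =>
          hw ((hInter ▸ hc : w ∈ A ∩ B)).1
        have hxuv : x ∈ ({u, v} : Set V) := by
          by_contra hc
          exact hsep x w ⟨hx, hc⟩ ⟨hwB, hwuv⟩ h
        obtain ⟨z, hzuv, r, hr⟩ :=
          chord_exit G A B u v hUnion hInter hsep q hw hy
        have hz : z ∈ A := by
          rcases hzuv with h1 | h1 <;> subst h1 <;> assumption
        obtain ⟨q', hq'⟩ := ih z y hz hy r (by omega)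
        by_cases hxz : x = z
        · subst hxz
          exact ⟨q', by simp only [Walk.length_cons]; omega⟩
        · have hadj : G.Adj x z := by
            rcases hxuv with h1 | h1 <;> rcases hzuv with h2 | h2 <;>
              subst h1 <;> subst h2 <;> first | exact absurd rfl hxz | exact huv | exact huv.symm
          refine ⟨Walk.cons (by exact hadj : (G.induce A).Adj ⟨x, hx⟩ ⟨z, hz⟩) q', ?_⟩
          exact Nat.succ_le_succ (by omega)

/-- **Chord splitting.** If `A ∪ B = V`, `A ∩ B = {u, v}`, `u` and `v` are adjacent,
and no edge joins `A \ {u, v}` to `B \ {u, v}`, then any two vertices of `A` that are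
connected in `G` are connected by a walk inside `A`, and the distance in the subgraph
induced on `A` equals the distance in `G`. -/
theorem chord_split {V : Type*} (G : SimpleGraph V) (A B : Set V) (u v : V)
    (hUnion : A ∪ B = Set.univ) (hInter : A ∩ B = {u, v}) (huv : G.Adj u v)
    (hsep : ∀ a b : V, a ∈ A \ {u, v} → b ∈ B \ {u, v} → ¬ G.Adj a b) :
    ∀ x y : V, ∀ hx : x ∈ A, ∀ hy : y ∈ A, G.Reachable x y →
      (∃ p : G.Walk x y, p.IsPath ∧ ∀ z ∈ p.support, z ∈ A) ∧
        (G.induce A).dist ⟨x, hx⟩ ⟨y, hy⟩ = G.dist x y := by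
  intro x y hx hy hreach
  obtain ⟨p, hpdist⟩ := hreach.exists_path_of_dist
  obtain ⟨q, hq⟩ := chord_key G A B u v hUnion hInter huv hsep p.length x y hx hy p le_rfl
  -- a path in the induced graph
  have hreach' : (G.induce A).Reachable ⟨x, hx⟩ ⟨y, hy⟩ := ⟨q⟩
  obtain ⟨q', hq'path, hq'dist⟩ := hreach'.exists_path_of_dist
  -- map it into G
  let emb := SimpleGraph.Embedding.induce (G := G) A
  let pw : G.Walk x y := (q'.map emb.toHom).copy rfl rfl
  have hlen : pw.length = q'.length := (Walk.length_copy _ _ _).trans (Walk.length_map _ _)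
  constructor
  · refine ⟨pw, ?_, ?_⟩
    · exact (Walk.isPath_copy _ _ _).mpr (Walk.map_isPath_of_injective emb.injective hq'path)
    · intro z hz
      rw [show pw.support = _ from Walk.support_copy _ _ _, Walk.support_map, List.mem_map] at hz
      obtain ⟨a, _, rfl⟩ := hz
      exact a.2
  · have le1 : (G.induce A).dist ⟨x, hx⟩ ⟨y, hy⟩ ≤ G.dist x y := by
      calc (G.induce A).dist ⟨x, hx⟩ ⟨y, hy⟩ ≤ q.length := dist_le q
        _ ≤ p.length := hq
        _ = G.dist x y := hpdist.2
    have le2 : G.dist x y ≤ (G.induce A).dist ⟨x, hx⟩ ⟨y, hy⟩ := by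
      calc G.dist x y ≤ pw.length := dist_le pw
        _ = (G.induce A).dist ⟨x, hx⟩ ⟨y, hy⟩ := by rw [hlen, hq'dist]
    omega
end

section
/- Let G be a simple graph on vertex set V, let A, B ⊆ V with A ∪ B = V and A ∩ B = {u, x, v}, suppose x is adjacent to both u and v in G, and suppose no edge of G joins a vertex of A \ {u, x, v} to a vertex of B \ {u, x, v}. Then for any y, z ∈ A that are joined by a path in G, y and z are joined by a path lying entirely in A, and the distance between y and z in the subgraph of G induced on A equals their distance in G. -/
open SimpleGraph

private lemma sector_firstA {V : Type*} (G : SimpleGraph V) (A B : Set V) (u x v : V)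
    (hUnion : A ∪ B = Set.univ) (hInter : A ∩ B = {u, x, v})
    (hsep : ∀ a b : V, a ∈ A \ {u, x, v} → b ∈ B \ {u, x, v} → ¬ G.Adj a b) :
    ∀ {c z : V} (p : G.Walk c z), c ∉ A → z ∈ A →
      ∃ t, t ∈ ({u, x, v} : Set V) ∧ ∃ p₂ : G.Walk t z, p₂.length + 1 ≤ p.length := by
  have hBdiff : ∀ c, c ∉ A → c ∈ B \ ({u, x, v} : Set V) := by
    intro c hc
    have hcB : c ∈ B := by
      have : c ∈ A ∪ B := hUnion ▸ Set.mem_univ c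
      rcases this with h | h
      · exact absurd h hc
      · exact h
    refine ⟨hcB, fun hcs => hc ?_⟩
    exact (hInter ▸ hcs : c ∈ A ∩ B).1
  intro c z p
  induction p with
  | nil => intro hc hz; exact absurd hz hc
  | @cons a b w h p' ih =>
    intro hc hz
    by_cases hb : b ∈ A
    · refine ⟨b, ?_, p', by simp [SimpleGraph.Walk.length_cons]⟩
      by_contra hbs
      exact hsep b a ⟨hb, hbs⟩ (hBdiff a hc) h.symm
    · obtain ⟨t, ht, p₂, hlen⟩ := ih hb hz
      exact ⟨t, ht, p₂, by simp [SimpleGraph.Walk.length_cons]; omega⟩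

private lemma sector_bridge {V : Type*} (G : SimpleGraph V) (A B : Set V) (u x v : V)
    (hInter : A ∩ B = {u, x, v}) (hxu : G.Adj x u) (hxv : G.Adj x v)
    (s t : V) (hs : s ∈ ({u, x, v} : Set V)) (ht : t ∈ ({u, x, v} : Set V))
    (hsA : s ∈ A) (htA : t ∈ A) :
    ∃ w : (G.induce A).Walk ⟨s, hsA⟩ ⟨t, htA⟩, w.length ≤ 2 := by
  have hadj : ∀ (a b : V) (ha : a ∈ A) (hb : b ∈ A), G.Adj a b →
      (G.induce A).Adj ⟨a, ha⟩ ⟨b, hb⟩ := fun a b ha hb hab => hab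
  have huA : u ∈ A := (hInter ▸ (by simp : u ∈ ({u,x,v} : Set V)) : u ∈ A ∩ B).1
  have hxA : x ∈ A := (hInter ▸ (by simp : x ∈ ({u,x,v} : Set V)) : x ∈ A ∩ B).1
  have hvA : v ∈ A := (hInter ▸ (by simp : v ∈ ({u,x,v} : Set V)) : v ∈ A ∩ B).1
  simp only [Set.mem_insert_iff, Set.mem_singleton_iff] at hs ht
  rcases hs with rfl | rfl | rfl <;> rcases ht with rfl | rfl | rfl
  · exact ⟨SimpleGraph.Walk.nil, by simp⟩
  · exact ⟨(hadj _ _ hsA htA hxu.symm).toWalk, by simp⟩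
  · exact ⟨SimpleGraph.Walk.cons (hadj _ _ hsA hxA hxu.symm)
      (hadj _ _ hxA htA hxv).toWalk, by simp⟩
  · exact ⟨(hadj _ _ hsA htA hxu).toWalk, by simp⟩
  · exact ⟨SimpleGraph.Walk.nil, by simp⟩
  · exact ⟨(hadj _ _ hsA htA hxv).toWalk, by simp⟩
  · exact ⟨SimpleGraph.Walk.cons (hadj _ _ hsA hxA hxv.symm)
      (hadj _ _ hxA htA hxu).toWalk, by simp⟩
  · exact ⟨(hadj _ _ hsA htA hxv.symm).toWalk, by simp⟩
  · exact ⟨SimpleGraph.Walk.nil, by simp⟩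

private lemma sector_toA {V : Type*} (G : SimpleGraph V) (A B : Set V) (u x v : V)
    (hUnion : A ∪ B = Set.univ) (hInter : A ∩ B = {u, x, v})
    (hxu : G.Adj x u) (hxv : G.Adj x v)
    (hsep : ∀ a b : V, a ∈ A \ {u, x, v} → b ∈ B \ {u, x, v} → ¬ G.Adj a b) :
    ∀ n : ℕ, ∀ y z : V, ∀ hy : y ∈ A, ∀ hz : z ∈ A, ∀ p : G.Walk y z, p.length ≤ n →
      ∃ q : (G.induce A).Walk ⟨y, hy⟩ ⟨z, hz⟩, q.length ≤ p.length := by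
  have hadj : ∀ (a b : V) (ha : a ∈ A) (hb : b ∈ A), G.Adj a b →
      (G.induce A).Adj ⟨a, ha⟩ ⟨b, hb⟩ := fun a b ha hb hab => hab
  have hBdiff : ∀ c, c ∉ A → c ∈ B \ ({u, x, v} : Set V) := by
    intro c hc
    have : c ∈ A ∪ B := hUnion ▸ Set.mem_univ c
    refine ⟨this.resolve_left hc, fun hcs => hc (hInter ▸ hcs : c ∈ A ∩ B).1⟩
  have hmemA : ∀ w ∈ ({u, x, v} : Set V), w ∈ A := fun w hw =>
    (hInter ▸ hw : w ∈ A ∩ B).1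
  intro n
  induction n with
  | zero =>
    intro y z hy hz p hp
    have hyz : y = z := p.eq_of_length_eq_zero (Nat.le_zero.mp hp)
    subst hyz
    exact ⟨SimpleGraph.Walk.nil, by simp⟩
  | succ n ih =>
    intro y z hy hz p hp
    cases p with
    | nil => exact ⟨SimpleGraph.Walk.nil, by simp⟩
    | @cons _ c _ h p' =>
      by_cases hcA : c ∈ A
      · obtain ⟨q', hq'⟩ := ih c z hcA hz p'
          (by simpa [SimpleGraph.Walk.length_cons] using Nat.succ_le_succ_iff.mp hp)
        exact ⟨SimpleGraph.Walk.cons (hadj _ _ hy hcA h) q',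
          by simpa [SimpleGraph.Walk.length_cons] using Nat.succ_le_succ hq'⟩
      · have hys : y ∈ ({u, x, v} : Set V) := by
          by_contra hys
          exact hsep y c ⟨hy, hys⟩ (hBdiff c hcA) h
        obtain ⟨t, ht, p₂, hlen⟩ :=
          sector_firstA G A B u x v hUnion hInter hsep p' hcA hz
        have htA : t ∈ A := hmemA t ht
        obtain ⟨q₂, hq₂⟩ := ih t z htA hz p₂ (by
          have hp' : p'.length ≤ n := by
            simpa [SimpleGraph.Walk.length_cons] using Nat.succ_le_succ_iff.mp hp
          omega)
        obtain ⟨w, hw⟩ := sector_bridge G A B u x v hInter hxu hxv y t hys ht hy htA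
        refine ⟨w.append q₂, ?_⟩
        rw [SimpleGraph.Walk.length_append, SimpleGraph.Walk.length_cons]
        omega

/-- **Sector splitting (Lemma 2.12, first claim).** If `A ∪ B = V`, `A ∩ B = {u, x, v}`,
`x` is adjacent to both `u` and `v`, and no edge joins `A \ {u, x, v}` to `B \ {u, x, v}`,
then any two vertices of `A` that are connected in `G` are connected by a walk inside `A`,
and the distance in the subgraph induced on `A` equals the distance in `G`. -/
theorem sector_split {V : Type*} (G : SimpleGraph V) (A B : Set V) (u x v : V)
    (hUnion : A ∪ B = Set.univ) (hInter : A ∩ B = {u, x, v})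
    (hxu : G.Adj x u) (hxv : G.Adj x v)
    (hsep : ∀ a b : V, a ∈ A \ {u, x, v} → b ∈ B \ {u, x, v} → ¬ G.Adj a b) :
    ∀ y z : V, ∀ hy : y ∈ A, ∀ hz : z ∈ A, G.Reachable y z →
      (∃ p : G.Walk y z, p.IsPath ∧ ∀ w ∈ p.support, w ∈ A) ∧
        (G.induce A).dist ⟨y, hy⟩ ⟨z, hz⟩ = G.dist y z := by
  classical
  intro y z hy hz hr
  obtain ⟨p, hp⟩ := hr.exists_walk_length_eq_dist
  obtain ⟨q, hq⟩ := sector_toA G A B u x v hUnion hInter hxu hxv hsep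
    p.length y z hy hz p le_rfl
  set w : G.Walk y z := (q.map (SimpleGraph.Embedding.induce A).toHom).copy rfl rfl with hwdef
  have hwlen : w.length = q.length := (SimpleGraph.Walk.length_copy _ _ _).trans (SimpleGraph.Walk.length_map _ _)
  have hwsupp : ∀ a ∈ w.support, a ∈ A := by
    intro a ha
    change a ∈ (q.map (SimpleGraph.Embedding.induce A).toHom).support at ha
    rw [SimpleGraph.Walk.support_map] at ha
    obtain ⟨b, _, rfl⟩ := List.mem_map.mp ha
    exact b.2
  constructor
  · refine ⟨w.toPath, w.toPath.2, fun a ha => hwsupp a ?_⟩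
    exact SimpleGraph.Walk.support_toPath_subset w ha
  · refine le_antisymm ?_ ?_
    · calc (G.induce A).dist ⟨y, hy⟩ ⟨z, hz⟩ ≤ q.length := SimpleGraph.dist_le q
        _ ≤ p.length := hq
        _ = G.dist y z := hp
    · obtain ⟨q', hq'⟩ := (SimpleGraph.Reachable.exists_walk_length_eq_dist ⟨q⟩ :
        ∃ p' : (G.induce A).Walk ⟨y, hy⟩ ⟨z, hz⟩, p'.length = (G.induce A).dist ⟨y, hy⟩ ⟨z, hz⟩)
      calc G.dist y z
          ≤ ((q'.map (SimpleGraph.Embedding.induce A).toHom).copy rfl rfl : G.Walk y z).length :=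
            SimpleGraph.dist_le _
        _ = q'.length := (SimpleGraph.Walk.length_copy _ _ _).trans (SimpleGraph.Walk.length_map _ _)
        _ = (G.induce A).dist ⟨y, hy⟩ ⟨z, hz⟩ := hq'
end

section
/- Let G be a simple graph and let a, b, x, t, y be vertices with t ∉ {a, b, x} and y ∉ {a, b, x}. Suppose t is adjacent to x, x is adjacent to both a and b, d_G(t, a) ≥ 2, d_G(t, b) ≥ 2, t and y are joined by a path in G, and every path in G from t to y passes through at least one of a, b, x. Then d_G(x, y) = d_G(t, y) − 1. -/
/-- **Lemma 2.12, second claim.** If `t` is adjacent to the hub `x`, `x` is adjacent to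
`a` and `b`, `d(t, a) ≥ 2`, `d(t, b) ≥ 2`, and every path from `t` to `y` passes through
one of `a`, `b`, `x`, then `d(x, y) = d(t, y) - 1`. -/
theorem hub_dist {V : Type*} (G : SimpleGraph V) (a b x t y : V)
    (ht : t ∉ ({a, b, x} : Set V)) (hy : y ∉ ({a, b, x} : Set V))
    (htx : G.Adj t x) (hxa : G.Adj x a) (hxb : G.Adj x b)
    (hta : 2 ≤ G.dist t a) (htb : 2 ≤ G.dist t b)
    (hreach : G.Reachable t y)
    (hcross : ∀ p : G.Walk t y, p.IsPath →
      a ∈ p.support ∨ b ∈ p.support ∨ x ∈ p.support) :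
    G.dist x y = G.dist t y - 1 := by
  classical
  obtain ⟨p, hpath, hplen⟩ := hreach.exists_path_of_dist
  -- splitting lemma: for any w on p, dist t w + dist w y ≤ dist t y
  have split : ∀ w (hw : w ∈ p.support), G.dist t w + G.dist w y ≤ G.dist t y := by
    intro w hw
    have h1 : G.dist t w ≤ (p.takeUntil w hw).length := SimpleGraph.dist_le _
    have h2 : G.dist w y ≤ (p.dropUntil w hw).length := SimpleGraph.dist_le _
    have h3 : (p.takeUntil w hw).length + (p.dropUntil w hw).length = p.length := by
      have := SimpleGraph.Walk.take_spec p hw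
      calc (p.takeUntil w hw).length + (p.dropUntil w hw).length
          = ((p.takeUntil w hw).append (p.dropUntil w hw)).length :=
            (SimpleGraph.Walk.length_append _ _).symm
        _ = p.length := by rw [this]
    omega
  -- d(t,y) ≤ d(x,y) + 1
  have hxy : G.Reachable x y := (SimpleGraph.Adj.reachable htx).symm.trans hreach
  obtain ⟨q, hqlen⟩ := hxy.exists_walk_length_eq_dist
  have hub : G.dist t y ≤ G.dist x y + 1 := by
    have := SimpleGraph.dist_le (SimpleGraph.Walk.cons htx q)
    simpa [hqlen, Nat.add_comm] using this
  -- lower bound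
  have hax : G.dist x a = 1 := SimpleGraph.dist_eq_one_iff_adj.mpr hxa
  have hbx : G.dist x b = 1 := SimpleGraph.dist_eq_one_iff_adj.mpr hxb
  have htx1 : G.dist t x = 1 := SimpleGraph.dist_eq_one_iff_adj.mpr htx
  have hlb : G.dist x y + 1 ≤ G.dist t y := by
    rcases hcross p hpath with hw | hw | hw
    · have h1 := split a hw
      have h2 : G.dist x y ≤ G.dist x a + G.dist a y := by
        obtain ⟨r, hr⟩ := (SimpleGraph.Walk.reachable (p.dropUntil a hw) :
          G.Reachable a y).exists_walk_length_eq_dist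
        have := SimpleGraph.dist_le (SimpleGraph.Walk.cons hxa r)
        simp only [SimpleGraph.Walk.length_cons] at this
        omega
      omega
    · have h1 := split b hw
      have h2 : G.dist x y ≤ G.dist x b + G.dist b y := by
        obtain ⟨r, hr⟩ := (SimpleGraph.Walk.reachable (p.dropUntil b hw) :
          G.Reachable b y).exists_walk_length_eq_dist
        have := SimpleGraph.dist_le (SimpleGraph.Walk.cons hxb r)
        simp only [SimpleGraph.Walk.length_cons] at this
        omega
      omega
    · have h1 := split x hw
      omega
  omega
end

section
/- Let G be a simple graph on vertex set V, let A ⊆ V and S ⊆ A. Suppose no edge of G joins a vertex of A \ S to a vertex of V \ A, and suppose that for all s, s' ∈ S, s and s' are joined by a path in A and the distance between s and s' in the subgraph of G induced on A equals d_G(s, s'). Then for all x, y ∈ A that are joined by a path in G, x and y are joined by a path lying entirely in A, and the distance between x and y in the induced subgraph G[A] equals d_G(x, y). -/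
open SimpleGraph

/-- Lift a walk whose support lies in `A` to a walk in the induced subgraph. -/
private lemma lift_walk {V : Type*} {G : SimpleGraph V} {A : Set V} :
    ∀ {x y : V} (p : G.Walk x y) (hp : ∀ z ∈ p.support, z ∈ A),
      ∃ q : (G.induce A).Walk ⟨x, hp x p.start_mem_support⟩ ⟨y, hp y p.end_mem_support⟩,
        q.length = p.length := by
  intro x y p
  induction p with
  | nil => intro hp; exact ⟨SimpleGraph.Walk.nil, rfl⟩
  | @cons a b c h q ih =>
      intro hp
      have hb : ∀ z ∈ q.support, z ∈ A := fun z hz => hp z (by simp [hz])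
      obtain ⟨q', hq'⟩ := ih hb
      refine ⟨SimpleGraph.Walk.cons (by simpa using h) q', by simp [hq']⟩

private lemma dist_le_induce_dist {V : Type*} {G : SimpleGraph V} {A : Set V}
    {x y : V} (hx : x ∈ A) (hy : y ∈ A)
    (h : (G.induce A).Reachable ⟨x, hx⟩ ⟨y, hy⟩) :
    G.dist x y ≤ (G.induce A).dist ⟨x, hx⟩ ⟨y, hy⟩ := by
  obtain ⟨p, hp⟩ := h.exists_walk_length_eq_dist
  have := SimpleGraph.dist_le (p.map (SimpleGraph.Embedding.induce A : G.induce A ↪g G).toHom)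
  rw [SimpleGraph.Walk.length_map, hp] at this
  exact this

/-- Decompose a walk starting outside `A` and ending in `A` at the first entry into `A`. -/
private lemma first_entry {V : Type*} {G : SimpleGraph V} {A : Set V} :
    ∀ {v y : V} (q : G.Walk v y), v ∉ A → y ∈ A →
      ∃ (u w : V) (h : G.Adj u w) (r : G.Walk v u) (q' : G.Walk w y),
        u ∉ A ∧ w ∈ A ∧ q = r.append (SimpleGraph.Walk.cons h q') := by
  intro v y q
  induction q with
  | nil => intro hv hy; exact absurd hy hv
  | @cons a b c h q ih =>
      intro hv hy
      by_cases hb : b ∈ A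
      · exact ⟨a, b, h, SimpleGraph.Walk.nil, q, hv, hb, rfl⟩
      · obtain ⟨u, w, h', r, q', hu, hw, heq⟩ := ih hb hy
        exact ⟨u, w, h', SimpleGraph.Walk.cons h r, q', hu, hw, by simp [heq]⟩

/-- **Distance-preservation principle (used in Lemmas 2.8 and 3.7).** If the only
vertices of `A` with neighbours outside `A` lie in `S ⊆ A`, and all distances between
vertices of `S` are realised inside `A`, then any two vertices of `A` connected in `G`
are connected inside `A`, and distances in the subgraph induced on `A` agree with
distances in `G`. -/
theorem dist_preservation {V : Type*} (G : SimpleGraph V) (A S : Set V) (hSA : S ⊆ A)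
    (hsep : ∀ a b : V, a ∈ A \ S → b ∉ A → ¬ G.Adj a b)
    (hS : ∀ s, ∀ hs : s ∈ S, ∀ s', ∀ hs' : s' ∈ S,
      (G.induce A).Reachable ⟨s, hSA hs⟩ ⟨s', hSA hs'⟩ ∧
        (G.induce A).dist ⟨s, hSA hs⟩ ⟨s', hSA hs'⟩ = G.dist s s') :
    ∀ x y : V, ∀ hx : x ∈ A, ∀ hy : y ∈ A, G.Reachable x y →
      (∃ p : G.Walk x y, p.IsPath ∧ ∀ z ∈ p.support, z ∈ A) ∧
        (G.induce A).dist ⟨x, hx⟩ ⟨y, hy⟩ = G.dist x y := by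
  classical
  -- main claim by strong induction on the distance
  have key : ∀ d : ℕ, ∀ x y : V, ∀ hx : x ∈ A, ∀ hy : y ∈ A, G.Reachable x y →
      G.dist x y = d →
      (G.induce A).Reachable ⟨x, hx⟩ ⟨y, hy⟩ ∧
        (G.induce A).dist ⟨x, hx⟩ ⟨y, hy⟩ = d := by
    intro d
    induction d using Nat.strong_induction_on with
    | _ d IH =>
      intro x y hx hy hr hd
      by_cases hxy : x = y
      · subst hxy
        have hd0 : d = 0 := by rw [← hd, SimpleGraph.dist_self]
        subst hd0
        exact ⟨SimpleGraph.Reachable.refl _, SimpleGraph.dist_self⟩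
      · obtain ⟨p, hp⟩ := hr.exists_walk_length_eq_dist
        rw [hd] at hp
        cases p with
        | nil => exact absurd rfl hxy
        | @cons _ v _ hadj q =>
          have hql : q.length + 1 = d := by simpa using hp
          have hdvy : G.dist v y = q.length := by
            have h1 : G.dist v y ≤ q.length := SimpleGraph.dist_le q
            have h2 : ∀ m, G.dist v y = m → d ≤ 1 + m := by
              intro m hm
              have hrv : G.Reachable v y := ⟨q⟩
              obtain ⟨q', hq'⟩ := hrv.exists_walk_length_eq_dist
              have := SimpleGraph.dist_le (SimpleGraph.Walk.cons hadj q')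
              simp only [SimpleGraph.Walk.length_cons, hq', hm, hd] at this
              omega
            have := h2 _ rfl
            omega
          by_cases hv : v ∈ A
          · -- next vertex stays in A
            obtain ⟨hre, hdi⟩ := IH q.length (by omega) v y hv hy ⟨q⟩ hdvy
            have hadj' : (G.induce A).Adj ⟨x, hx⟩ ⟨v, hv⟩ := by simpa using hadj
            refine ⟨hadj'.reachable.trans hre, ?_⟩
            have hub : (G.induce A).dist ⟨x, hx⟩ ⟨y, hy⟩ ≤ d := by
              obtain ⟨q', hq'⟩ := hre.exists_walk_length_eq_dist
              have := SimpleGraph.dist_le (SimpleGraph.Walk.cons hadj' q')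
              simp only [SimpleGraph.Walk.length_cons, hq', hdi] at this
              omega
            have hlb := dist_le_induce_dist hx hy (hadj'.reachable.trans hre)
            rw [hd] at hlb
            omega
          · -- the walk leaves A immediately; x must be in S
            have hxS : x ∈ S := by
              by_contra hxs
              exact hsep x v ⟨hx, hxs⟩ hv hadj
            obtain ⟨u, w, huw, r, q', hu, hw, heq⟩ := first_entry q hv hy
            have hwS : w ∈ S := by
              by_contra hws
              exact hsep w u ⟨hw, hws⟩ hu huw.symm
            -- length bookkeeping
            have hqlen : q.length = r.length + 1 + q'.length := by
              rw [heq]; simp [SimpleGraph.Walk.length_append]; omega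
            -- walk from x to w of length r.length + 2
            have hdxw : G.dist x w ≤ r.length + 2 := by
              have := SimpleGraph.dist_le
                (SimpleGraph.Walk.cons hadj (r.append (SimpleGraph.Walk.cons huw SimpleGraph.Walk.nil)))
              simpa [SimpleGraph.Walk.length_append] using this
            have hdwy : G.dist w y ≤ q'.length := SimpleGraph.dist_le q'
            -- triangle: d ≤ dist x w + dist w y
            have htri : d ≤ G.dist x w + G.dist w y := by
              have hrxw : G.Reachable x w :=
                ⟨SimpleGraph.Walk.cons hadj (r.append (SimpleGraph.Walk.cons huw SimpleGraph.Walk.nil))⟩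
              have hrwy : G.Reachable w y := ⟨q'⟩
              obtain ⟨p1, hp1⟩ := hrxw.exists_walk_length_eq_dist
              obtain ⟨p2, hp2⟩ := hrwy.exists_walk_length_eq_dist
              have := SimpleGraph.dist_le (p1.append p2)
              rw [SimpleGraph.Walk.length_append, hp1, hp2, hd] at this
              exact this
            have hdxw' : G.dist x w = r.length + 2 := by omega
            have hdwy' : G.dist w y = q'.length := by omega
            -- use hypothesis on S for x, w
            obtain ⟨hreS, hdiS⟩ := hS x hxS w hwS
            -- induction for w, y
            obtain ⟨hre2, hdi2⟩ := IH q'.length (by omega) w y (hSA hwS) hy ⟨q'⟩ hdwy'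
            refine ⟨hreS.trans hre2, ?_⟩
            have hub : (G.induce A).dist ⟨x, hx⟩ ⟨y, hy⟩ ≤ d := by
              obtain ⟨p1, hp1⟩ := hreS.exists_walk_length_eq_dist
              obtain ⟨p2, hp2⟩ := hre2.exists_walk_length_eq_dist
              have := SimpleGraph.dist_le (p1.append p2)
              rw [SimpleGraph.Walk.length_append, hp1, hp2, hdiS, hdi2, hdxw'] at this
              omega
            have hlb := dist_le_induce_dist hx hy (hreS.trans hre2)
            rw [hd] at hlb
            omega
  intro x y hx hy hr
  obtain ⟨hre, hdi⟩ := key (G.dist x y) x y hx hy hr rfl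
  constructor
  · obtain ⟨q⟩ := hre
    let q' := q.toPath.val
    refine ⟨q'.map (SimpleGraph.Embedding.induce A : G.induce A ↪g G).toHom,
      SimpleGraph.Walk.map_isPath_of_injective (SimpleGraph.Embedding.induce A : G.induce A ↪g G).injective q.toPath.property, ?_⟩
    intro z hz
    have hz : z ∈ (q'.map (SimpleGraph.Embedding.induce A : G.induce A ↪g G).toHom).support := hz
    rw [SimpleGraph.Walk.support_map] at hz
    obtain ⟨⟨z', hz'⟩, _, rfl⟩ := List.mem_map.mp hz
    exact hz'
  · exact hdi
end

section
/- Let G be a simple graph, k ≥ 4 an integer, and let v_0, v_1, …, v_k, w_1, …, w_{k−2}, x be pairwise distinct vertices with x joined by a path in G to v_0. Suppose: (a) v_i is adjacent to v_{i+1} for 0 ≤ i ≤ k−1; (b) w_i is adjacent to w_{i+1} for 1 ≤ i ≤ k−3; (c) w_i is adjacent to both v_i and v_{i+1} for 1 ≤ i ≤ k−2; (d) v_0 is adjacent to w_1 and v_k is adjacent to w_{k−2}; (e) the neighbourhood of v_1 in G is exactly {v_0, v_2, w_1}, the neighbourhood of v_{k−1} is exactly {v_{k−2}, v_k, w_{k−2}},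 and for 2 ≤ i ≤ k−2 the neighbourhood of v_i is exactly {v_{i−1}, v_{i+1}, w_{i−1}, w_i}; (f) for each 1 ≤ i ≤ k−2, the three distances d_G(x, v_i), d_G(x, w_i), d_G(x, v_{i+1}) are not all equal. Then for each 1 ≤ j ≤ k−2: if d_G(x, v_j) ≠ d_G(x, v_{j+1}) then d_G(x, w_j) = min(d_G(x, v_j), d_G(x, v_{j+1})), and if d_G(x, v_j) = d_G(x, v_{j+1}) then d_G(x, w_j) = d_G(x, v_j) − 1. -/
private lemma adj_dist_le' {V : Type*} {G : SimpleGraph V} {x u y : V}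
    (hr : G.Reachable x u) (h : G.Adj u y) : G.dist x y ≤ G.dist x u + 1 := by
  obtain ⟨p, hp⟩ := hr.exists_walk_length_eq_dist
  have := SimpleGraph.dist_le (p.concat h)
  rwa [SimpleGraph.Walk.length_concat, hp] at this

private lemma exists_pred' {V : Type*} {G : SimpleGraph V} {x u : V}
    (hr : G.Reachable x u) (hne : x ≠ u) :
    ∃ y, G.Adj u y ∧ G.dist x y + 1 = G.dist x u := by
  obtain ⟨p, hp⟩ := hr.symm.exists_walk_length_eq_dist
  have hpos : 0 < G.dist u x := hr.symm.pos_dist_of_ne (Ne.symm hne)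
  have hnil : ¬ p.Nil := by
    rw [SimpleGraph.Walk.not_nil_iff_lt_length, hp]; exact hpos
  obtain ⟨y, hadj, q, rfl⟩ := SimpleGraph.Walk.not_nil_iff.mp hnil
  refine ⟨y, hadj, ?_⟩
  simp only [SimpleGraph.Walk.length_cons] at hp
  have h1 : G.dist x y ≤ q.length := by
    have := SimpleGraph.dist_le q
    rwa [SimpleGraph.dist_comm] at this
  have h2 : G.dist x u ≤ G.dist x y + 1 :=
    adj_dist_le' (q.reverse.reachable) hadj.symm
  have h3 : G.dist x u = G.dist u x := SimpleGraph.dist_comm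
  omega

/-- **Lemma 2.8 (nice-reduce), distance determination.** In a nice configuration of a
triangulation (boundary vertices `v 0, …, v k`, internal vertices `w 1, …, w (k-2)`),
for any vertex `x`, the distance `d(x, w j)` is determined by `d(x, v j)` and
`d(x, v (j+1))`: it is the minimum of the two if they differ, and one less if they are
equal. -/
theorem nice_reduce_tri {V : Type*} (G : SimpleGraph V) (k : ℕ) (hk : 4 ≤ k)
    (v w : ℕ → V) (x : V)
    (hdistinct_v : ∀ i ≤ k, ∀ j ≤ k, i ≠ j → v i ≠ v j)
    (hdistinct_w : ∀ i, 1 ≤ i → i + 2 ≤ k → ∀ j, 1 ≤ j → j + 2 ≤ k → i ≠ j → w i ≠ w j)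
    (hdistinct_vw : ∀ i ≤ k, ∀ j, 1 ≤ j → j + 2 ≤ k → v i ≠ w j)
    (hdistinct_xv : ∀ i ≤ k, x ≠ v i)
    (hdistinct_xw : ∀ j, 1 ≤ j → j + 2 ≤ k → x ≠ w j)
    (hreach : G.Reachable x (v 0))
    (ha : ∀ i, i < k → G.Adj (v i) (v (i + 1)))
    (hb : ∀ i, 1 ≤ i → i + 3 ≤ k → G.Adj (w i) (w (i + 1)))
    (hc : ∀ i, 1 ≤ i → i + 2 ≤ k → G.Adj (w i) (v i) ∧ G.Adj (w i) (v (i + 1)))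
    (hd₁ : G.Adj (v 0) (w 1)) (hd₂ : G.Adj (v k) (w (k - 2)))
    (he₁ : G.neighborSet (v 1) = {v 0, v 2, w 1})
    (he₂ : G.neighborSet (v (k - 1)) = {v (k - 2), v k, w (k - 2)})
    (he₃ : ∀ i, 2 ≤ i → i + 2 ≤ k →
      G.neighborSet (v i) = {v (i - 1), v (i + 1), w (i - 1), w i})
    (hf : ∀ i, 1 ≤ i → i + 2 ≤ k →
      ¬ (G.dist x (v i) = G.dist x (w i) ∧ G.dist x (w i) = G.dist x (v (i + 1)))) :
    ∀ j, 1 ≤ j → j + 2 ≤ k →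
      (G.dist x (v j) ≠ G.dist x (v (j + 1)) →
        G.dist x (w j) = min (G.dist x (v j)) (G.dist x (v (j + 1)))) ∧
      (G.dist x (v j) = G.dist x (v (j + 1)) →
        G.dist x (w j) = G.dist x (v j) - 1) := by
  have hrv : ∀ i, i ≤ k → G.Reachable x (v i) := by
    intro i hi
    induction i with
    | zero => exact hreach
    | succ n ih => exact (ih (by omega)).trans (ha n (by omega)).reachable
  have hrw : ∀ j, 1 ≤ j → j + 2 ≤ k → G.Reachable x (w j) := fun j h1 h2 =>
    (hrv j (by omega)).trans ((hc j h1 h2).1.symm.reachable)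
  -- part A : dist x (w j) ≤ dist x (v j)
  have hA : ∀ n, ∀ j, 1 ≤ j → j + 2 ≤ k → G.dist x (v j) ≤ n →
      G.dist x (w j) ≤ G.dist x (v j) := by
    intro n
    induction n with
    | zero =>
      intro j h1 h2 hle
      have := (hrv j (by omega)).pos_dist_of_ne (hdistinct_xv j (by omega))
      omega
    | succ n ih =>
      intro j h1 h2 hle
      obtain ⟨y, hadj, hy⟩ :=
        exists_pred' (hrv j (by omega)) (hdistinct_xv j (by omega))
      have hmem : y ∈ G.neighborSet (v j) := hadj
      by_cases hj : j = 1
      · subst hj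
        rw [he₁] at hmem
        simp only [Set.mem_insert_iff, Set.mem_singleton_iff] at hmem
        rcases hmem with rfl | rfl | rfl
        · have := adj_dist_le' (hrv 0 (by omega)) hd₁
          omega
        · have := adj_dist_le' (hrv 2 (by omega)) (hc 1 le_rfl h2).2.symm
          omega
        · omega
      · have h2' : 2 ≤ j := by omega
        rw [he₃ j h2' h2] at hmem
        have e : j - 1 + 1 = j := by omega
        simp only [Set.mem_insert_iff, Set.mem_singleton_iff] at hmem
        rcases hmem with rfl | rfl | rfl | rfl
        · -- y = v (j - 1)
          have hle' : G.dist x (v (j - 1)) ≤ n := by omega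
          have hih := ih (j - 1) (by omega) (by omega) hle'
          have hbadj := hb (j - 1) (by omega) (by omega)
          rw [e] at hbadj
          have := adj_dist_le' (hrw (j - 1) (by omega) (by omega)) hbadj
          omega
        · -- y = v (j + 1)
          have := adj_dist_le' (hrv (j + 1) (by omega)) (hc j h1 h2).2.symm
          omega
        · -- y = w (j - 1)
          have hbadj := hb (j - 1) (by omega) (by omega)
          rw [e] at hbadj
          have := adj_dist_le' (hrw (j - 1) (by omega) (by omega)) hbadj
          omega
        · -- y = w j
          omega
  -- part B : dist x (w j) ≤ dist x (v (j+1))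
  have hB : ∀ n, ∀ j, 1 ≤ j → j + 2 ≤ k → G.dist x (v (j + 1)) ≤ n →
      G.dist x (w j) ≤ G.dist x (v (j + 1)) := by
    intro n
    induction n with
    | zero =>
      intro j h1 h2 hle
      have := (hrv (j + 1) (by omega)).pos_dist_of_ne (hdistinct_xv (j + 1) (by omega))
      omega
    | succ n ih =>
      intro j h1 h2 hle
      obtain ⟨y, hadj, hy⟩ :=
        exists_pred' (hrv (j + 1) (by omega)) (hdistinct_xv (j + 1) (by omega))
      have hmem : y ∈ G.neighborSet (v (j + 1)) := hadj
      by_cases h3 : j + 3 ≤ k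
      · rw [he₃ (j + 1) (by omega) (by omega)] at hmem
        have e : j + 1 - 1 = j := by omega
        rw [e] at hmem
        simp only [Set.mem_insert_iff, Set.mem_singleton_iff] at hmem
        rcases hmem with rfl | rfl | rfl | rfl
        · -- y = v j
          have := adj_dist_le' (hrv j (by omega)) (hc j h1 h2).1.symm
          omega
        · -- y = v (j + 1 + 1)
          have hle' : G.dist x (v (j + 1 + 1)) ≤ n := by omega
          have hih := ih (j + 1) (by omega) (by omega) hle'
          have := adj_dist_le'
            (hrw (j + 1) (by omega) (by omega)) (hb j h1 h3).symm
          omega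
        · -- y = w j
          omega
        · -- y = w (j + 1)
          have := adj_dist_le'
            (hrw (j + 1) (by omega) (by omega)) (hb j h1 h3).symm
          omega
      · -- j + 2 = k
        have e1 : k - 1 = j + 1 := by omega
        have e2 : k - 2 = j := by omega
        rw [e1, e2] at he₂
        rw [e2] at hd₂
        rw [he₂] at hmem
        simp only [Set.mem_insert_iff, Set.mem_singleton_iff] at hmem
        rcases hmem with rfl | rfl | rfl
        · have := adj_dist_le' (hrv j (by omega)) (hc j h1 h2).1.symm
          omega
        · have := adj_dist_le' (hrv k le_rfl) hd₂
          omega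
        · omega
  intro j h1 h2
  have hu1 : G.dist x (v j) ≤ G.dist x (w j) + 1 :=
    adj_dist_le' (hrw j h1 h2) (hc j h1 h2).1
  have hu2 : G.dist x (v (j + 1)) ≤ G.dist x (w j) + 1 :=
    adj_dist_le' (hrw j h1 h2) (hc j h1 h2).2
  have hl1 : G.dist x (w j) ≤ G.dist x (v j) := hA _ j h1 h2 le_rfl
  have hl2 : G.dist x (w j) ≤ G.dist x (v (j + 1)) := hB _ j h1 h2 le_rfl
  have hpos : 0 < G.dist x (v j) :=
    (hrv j (by omega)).pos_dist_of_ne (hdistinct_xv j (by omega))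
  have hf' := hf j h1 h2
  constructor
  · intro hne; omega
  · intro heq; omega
end

section
/- Let G be a simple graph and let v_1, v_2, v_3, v_4, w, x be pairwise distinct vertices with x joined by a path in G to v_2. Suppose: w is adjacent to each of v_1, v_2, v_3, v_4; v_1 is adjacent to v_2, v_2 is adjacent to v_3, and v_3 is adjacent to v_4; the neighbourhood of v_2 in G is exactly {v_1, v_3, w}; the neighbourhood of v_3 in G is exactly {v_2, v_4, w}; and the three distances d_G(x, v_2), d_G(x, w), d_G(x, v_3) are not all equal. Then: if d_G(x, v_2) ≠ d_G(x, v_3) then d_G(x, w) = min(d_G(x, v_2), d_G(x, v_3)), and if d_G(x, v_2) = d_G(x, v_3) then d_G(x, w) = d_G(x, v_2) − 1. -/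
lemma dist_le_adj {V : Type*} {G : SimpleGraph V} {x u v : V}
    (hr : G.Reachable x u) (h : G.Adj u v) : G.dist x v ≤ G.dist x u + 1 := by
  obtain ⟨p, hp⟩ := hr.exists_walk_length_eq_dist
  calc G.dist x v ≤ (p.concat h).length := G.dist_le _
    _ = G.dist x u + 1 := by rw [SimpleGraph.Walk.length_concat, hp]

lemma exists_last_step {V : Type*} {G : SimpleGraph V} {x v : V}
    (hr : G.Reachable x v) (hne : x ≠ v) :
    ∃ u, G.Adj u v ∧ G.dist x v = G.dist x u + 1 := by
  obtain ⟨p, hp⟩ := hr.exists_walk_length_eq_dist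
  cases p with
  | nil => exact absurd rfl hne
  | cons h q =>
    obtain ⟨u, r, h', hc⟩ := SimpleGraph.Walk.exists_cons_eq_concat h q
    refine ⟨u, h', le_antisymm (dist_le_adj ⟨r⟩ h') ?_⟩
    have hl : r.length + 1 = G.dist x v := by
      rw [← hp, hc, SimpleGraph.Walk.length_concat]
    have := G.dist_le r
    omega

/-- **Four consecutive boundary neighbours (in the proof of Theorem 1.1).** If an
internal vertex `w` has four consecutive boundary neighbours `v₁, v₂, v₃, v₄`, where
`v₂` and `v₃` have no other neighbours, then for any vertex `x` (not equidistant from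
the triangle `v₂ w v₃`), `d(x, w)` is determined: it equals
`min (d(x, v₂)) (d(x, v₃))` if these differ, and `d(x, v₂) - 1` if they are equal. -/
theorem four_consecutive {V : Type*} (G : SimpleGraph V) (v₁ v₂ v₃ v₄ w x : V)
    (hdistinct : List.Pairwise (· ≠ ·) [v₁, v₂, v₃, v₄, w, x])
    (hreach : G.Reachable x v₂)
    (hw₁ : G.Adj w v₁) (hw₂ : G.Adj w v₂) (hw₃ : G.Adj w v₃) (hw₄ : G.Adj w v₄)
    (h₁₂ : G.Adj v₁ v₂) (h₂₃ : G.Adj v₂ v₃) (h₃₄ : G.Adj v₃ v₄)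
    (hN₂ : G.neighborSet v₂ = {v₁, v₃, w})
    (hN₃ : G.neighborSet v₃ = {v₂, v₄, w})
    (hne : ¬ (G.dist x v₂ = G.dist x w ∧ G.dist x w = G.dist x v₃)) :
    (G.dist x v₂ ≠ G.dist x v₃ → G.dist x w = min (G.dist x v₂) (G.dist x v₃)) ∧
    (G.dist x v₂ = G.dist x v₃ → G.dist x w = G.dist x v₂ - 1) := by
  simp only [List.pairwise_cons, List.mem_cons, ne_eq] at hdistinct
  have hx2 : x ≠ v₂ := fun h => hdistinct.2.1 x (by simp) h.symm
  have hx3 : x ≠ v₃ := fun h => hdistinct.2.2.1 x (by simp) h.symm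
  -- reachabilities
  have r2 : G.Reachable x v₂ := hreach
  have r1 : G.Reachable x v₁ := r2.trans h₁₂.symm.reachable
  have r3 : G.Reachable x v₃ := r2.trans h₂₃.reachable
  have r4 : G.Reachable x v₄ := r3.trans h₃₄.reachable
  have rw' : G.Reachable x w := r2.trans hw₂.symm.reachable
  -- upper bounds from adjacency
  have u1 : G.dist x v₂ ≤ G.dist x v₁ + 1 := dist_le_adj r1 h₁₂
  have u2 : G.dist x v₂ ≤ G.dist x v₃ + 1 := dist_le_adj r3 h₂₃.symm
  have u3 : G.dist x v₂ ≤ G.dist x w + 1 := dist_le_adj rw' hw₂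
  have u4 : G.dist x v₃ ≤ G.dist x v₂ + 1 := dist_le_adj r2 h₂₃
  have u5 : G.dist x v₃ ≤ G.dist x v₄ + 1 := dist_le_adj r4 h₃₄.symm
  have u6 : G.dist x v₃ ≤ G.dist x w + 1 := dist_le_adj rw' hw₃
  have u7 : G.dist x w ≤ G.dist x v₂ + 1 := dist_le_adj r2 hw₂.symm
  have u8 : G.dist x w ≤ G.dist x v₃ + 1 := dist_le_adj r3 hw₃.symm
  have u9 : G.dist x w ≤ G.dist x v₁ + 1 := dist_le_adj r1 hw₁.symm
  have u10 : G.dist x w ≤ G.dist x v₄ + 1 := dist_le_adj r4 hw₄.symm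
  have hpos : 0 < G.dist x v₂ := r2.pos_dist_of_ne hx2
  -- last step into v₂
  obtain ⟨u, hu, hxu⟩ := exists_last_step r2 hx2
  have hu' : u ∈ ({v₁, v₃, w} : Set V) := hN₂ ▸ hu.symm
  have ha : G.dist x v₂ = G.dist x v₁ + 1 ∨ G.dist x v₂ = G.dist x v₃ + 1 ∨
      G.dist x v₂ = G.dist x w + 1 := by
    rcases hu' with h | h | h <;> subst h <;> simp [hxu]
  -- last step into v₃
  obtain ⟨t, ht, hxt⟩ := exists_last_step r3 hx3
  have ht' : t ∈ ({v₂, v₄, w} : Set V) := hN₃ ▸ ht.symm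
  have hb : G.dist x v₃ = G.dist x v₂ + 1 ∨ G.dist x v₃ = G.dist x v₄ + 1 ∨
      G.dist x v₃ = G.dist x w + 1 := by
    rcases ht' with h | h | h <;> subst h <;> simp [hxt]
  omega
end

section
/- Let G be the simple graph on the 19-element vertex set {c} ∪ {s_t : t ∈ ZMod 6} ∪ {b_i : i ∈ ZMod 12} whose edges are exactly: c s_t for all t ∈ ZMod 6; s_t s_{t+1} for all t ∈ ZMod 6; b_i b_{i+1} for all i ∈ ZMod 12; and s_t b_{2t}, s_t b_{2t+1} for all t ∈ ZMod 6. Then for all i, j ∈ ZMod 12, the distance d_G(b_i, b_j) equals min(ℓ, 12 − ℓ, 4), where ℓ is the representative in {0, 1, …, 11} of i − j. In particular, the distances between the twelve vertices b_0, …, b_{11} are invariant under the cyclic shift b_i ↦ b_{i+1}. -/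
/-!
Everything is a finite computation on a 19-vertex graph. Breadth-first search layers
`G.closedBallFinset u n` are exactly the vertices at extended distance at most `n` from `u`,
so a distance is certified by membership in one layer and absence from the earlier ones,
which `decide` checks for all pairs of boundary vertices.
-/

abbrev CexV : Type := Unit ⊕ ZMod 6 ⊕ ZMod 12
def cV : CexV := Sum.inl ()
def sV (t : ZMod 6) : CexV := Sum.inr (Sum.inl t)
def bV (i : ZMod 12) : CexV := Sum.inr (Sum.inr i)

namespace SimpleGraph

variable {V : Type*} (G : SimpleGraph V)

lemma edist_le_iff_exists_walk {u v : V} {n : ℕ} :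
    G.edist u v ≤ n ↔ ∃ p : G.Walk u v, p.length ≤ n := by
  refine ⟨fun h => ?_, fun ⟨p, hp⟩ => (G.edist_le p).trans (by exact_mod_cast hp)⟩
  obtain ⟨p, hp⟩ := G.exists_walk_of_edist_ne_top (h.trans_lt (ENat.natCast_lt_top n)).ne
  exact ⟨p, by exact_mod_cast hp ▸ h⟩

variable [Fintype V] [DecidableEq V] [DecidableRel G.Adj]

def closedBallFinset (u : V) : ℕ → Finset V
  | 0 => {u}
  | n + 1 => closedBallFinset u n ∪
      Finset.univ.filter fun v => ∃ w ∈ closedBallFinset u n, G.Adj v w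

lemma mem_closedBallFinset {u v : V} {n : ℕ} :
    v ∈ G.closedBallFinset u n ↔ G.edist v u ≤ n := by
  rw [edist_le_iff_exists_walk]
  induction n generalizing v with
  | zero =>
    simp only [closedBallFinset, Finset.mem_singleton, Nat.le_zero]
    exact ⟨fun h => h ▸ ⟨.nil, rfl⟩, fun ⟨p, hp⟩ => p.eq_of_length_eq_zero hp⟩
  | succ n ih =>
    simp only [closedBallFinset, Finset.mem_union, Finset.mem_filter, Finset.mem_univ, true_and,
      ih]
    constructor
    · rintro (⟨p, hp⟩ | ⟨w, ⟨p, hp⟩, hvw⟩)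
      · exact ⟨p, by omega⟩
      · exact ⟨.cons hvw p, by simp [hp]⟩
    · rintro ⟨_ | ⟨hvw, p⟩, hp⟩
      · exact .inl ⟨.nil, by simp⟩
      · exact .inr ⟨_, ⟨p, by simpa using hp⟩, hvw⟩

lemma dist_eq_of_mem_closedBallFinset {u v : V} {n : ℕ} (h : v ∈ G.closedBallFinset u n)
    (hmin : ∀ m < n, v ∉ G.closedBallFinset u m) : G.dist v u = n := by
  simp only [mem_closedBallFinset] at h hmin
  obtain ⟨k, hk⟩ := ENat.ne_top_iff_exists.1 (h.trans_lt (ENat.natCast_lt_top n)).ne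
  have hkn : k = n := by
    by_contra hne
    exact hmin k (by exact_mod_cast (hk ▸ h).lt_of_ne (by exact_mod_cast hne)) hk.ge
  rw [dist, ← hk, hkn, ENat.toNat_natCast]

end SimpleGraph

/-- Boolean-valued so that the kernel evaluates it quickly inside `decide`. -/
def figure4Adj : CexV → CexV → Bool
  | .inl _, .inr (.inl _) | .inr (.inl _), .inl _ => true
  | .inr (.inl t), .inr (.inl t') => t' == t + 1 || t == t' + 1
  | .inr (.inr i), .inr (.inr j) => j == i + 1 || i == j + 1
  | .inr (.inl t), .inr (.inr i) | .inr (.inr i), .inr (.inl t) =>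
      i == 2 * t.val || i == 2 * t.val + 1
  | _, _ => false

def figure4Graph : SimpleGraph CexV where
  Adj u v := figure4Adj u v
  symm := ⟨by decide⟩
  loopless := ⟨by decide⟩

instance : DecidableRel figure4Graph.Adj := fun u v => inferInstanceAs (Decidable (figure4Adj u v))

def boundaryDist (i j : ZMod 12) : ℕ := min (min (i - j).val (12 - (i - j).val)) 4

lemma boundaryDist_add_add (i j k : ZMod 12) :
    boundaryDist (i + k) (j + k) = boundaryDist i j := by
  rw [boundaryDist, boundaryDist, add_sub_add_right_eq_sub]

lemma figure4Graph_dist_boundary (i j : ZMod 12) :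
    figure4Graph.dist (bV i) (bV j) = boundaryDist i j := by
  have layers : ∀ i j : ZMod 12,
      bV i ∈ figure4Graph.closedBallFinset (bV j) (boundaryDist i j) ∧
        ∀ m < boundaryDist i j, bV i ∉ figure4Graph.closedBallFinset (bV j) m := by
    decide
  exact figure4Graph.dist_eq_of_mem_closedBallFinset (layers i j).1 (layers i j).2

set_option synthInstance.maxSize 512 in
/-- **Figure 4 (left), Section 4.** In the graph with centre `c` joined to a 6-cycle of
spokes `s t`, a 12-cycle of boundary vertices `b i`, and `s t` joined to `b (2t)` and
`b (2t+1)`, the distance between boundary vertices `b i` and `b j` is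
`min (ℓ, 12 - ℓ, 4)` where `ℓ` is the representative of `i - j`; in particular boundary
distances are invariant under the rotation `b i ↦ b (i+1)`. -/
theorem figure4_distances (G : SimpleGraph CexV)
    (hAdj : ∀ u v : CexV, G.Adj u v ↔
      ((∃ t : ZMod 6, (u = cV ∧ v = sV t) ∨ (u = sV t ∧ v = cV)) ∨
       (∃ t : ZMod 6, (u = sV t ∧ v = sV (t + 1)) ∨ (u = sV (t + 1) ∧ v = sV t)) ∨
       (∃ i : ZMod 12, (u = bV i ∧ v = bV (i + 1)) ∨ (u = bV (i + 1) ∧ v = bV i)) ∨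
       (∃ t : ZMod 6, (u = sV t ∧ v = bV (2 * t.val)) ∨ (u = bV (2 * t.val) ∧ v = sV t)) ∨
       (∃ t : ZMod 6,
         (u = sV t ∧ v = bV (2 * t.val + 1)) ∨ (u = bV (2 * t.val + 1) ∧ v = sV t)))) :
    (∀ i j : ZMod 12,
      G.dist (bV i) (bV j) = min (min (i - j).val (12 - (i - j).val)) 4) ∧
    (∀ i j : ZMod 12, G.dist (bV (i + 1)) (bV (j + 1)) = G.dist (bV i) (bV j)) := by
  have hG : G = figure4Graph := by
    ext u v
    rw [hAdj]
    change _ ↔ figure4Adj u v = true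
    revert u v
    decide
  subst hG
  refine ⟨figure4Graph_dist_boundary, fun i j => ?_⟩
  rw [figure4Graph_dist_boundary, figure4Graph_dist_boundary, boundaryDist_add_add]
end

section
/- Let G be a simple graph and let a, b, c, d be vertices such that a and c are joined by a path in G, b and d are joined by a path in G, and every path in G from a to c shares at least one vertex with every path in G from b to d. Then d_G(a, b) + d_G(c, d) ≤ d_G(a, c) + d_G(b, d). -/
/-- **Four-point condition (Proposition, Section 5).** If every path from `a` to `c`
shares a vertex with every path from `b` to `d`, then
`d(a, b) + d(c, d) ≤ d(a, c) + d(b, d)`. -/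
theorem four_point {V : Type*} (G : SimpleGraph V) (a b c d : V)
    (hac : G.Reachable a c) (hbd : G.Reachable b d)
    (hcross : ∀ (p : G.Walk a c) (q : G.Walk b d), p.IsPath → q.IsPath →
      ∃ z : V, z ∈ p.support ∧ z ∈ q.support) :
    G.dist a b + G.dist c d ≤ G.dist a c + G.dist b d := by
  classical
  obtain ⟨p, hp, hpl⟩ := hac.exists_path_of_dist
  obtain ⟨q, hq, hql⟩ := hbd.exists_path_of_dist
  obtain ⟨z, hzp, hzq⟩ := hcross p q hp hq
  have h1 : G.dist a b ≤ (p.takeUntil z hzp).length + (q.takeUntil z hzq).length := by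
    calc G.dist a b ≤ ((p.takeUntil z hzp).append (q.takeUntil z hzq).reverse).length :=
          SimpleGraph.dist_le _
      _ = _ := by rw [SimpleGraph.Walk.length_append, SimpleGraph.Walk.length_reverse]
  have h2 : G.dist c d ≤ (p.dropUntil z hzp).length + (q.dropUntil z hzq).length := by
    calc G.dist c d ≤ ((p.dropUntil z hzp).reverse.append (q.dropUntil z hzq)).length :=
          SimpleGraph.dist_le _
      _ = _ := by rw [SimpleGraph.Walk.length_append, SimpleGraph.Walk.length_reverse]
  have hps : (p.takeUntil z hzp).length + (p.dropUntil z hzp).length = G.dist a c := by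
    rw [← hpl, ← SimpleGraph.Walk.length_append, SimpleGraph.Walk.take_spec]
  have hqs : (q.takeUntil z hzq).length + (q.dropUntil z hzq).length = G.dist b d := by
    rw [← hql, ← SimpleGraph.Walk.length_append, SimpleGraph.Walk.take_spec]
  omega
end
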